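/- arXiv:1706.03217 — 6 statements merged into one kernel-verified Lean document; each statement's English description precedes it below -/
import Mathlib

section
/- Let k be an algebraically closed field. If there exists a nonconstant morphism ψ from P^{1}_k to V(d) − L(d), i.e. an N×N matrix Ψ = (ψ_{ij}) of polynomials over k in 2 variables satisfying conditions (I)–(III), then N ≥ 4. -/
/-! For `N = 2` the only entry of `Ψ` that can be nonzero is `Ψ 0 1`, a binary form of positive
degree `m (d₀ - d₁ + 1)`. Over an algebraically closed field such a form has a zero `γ ≠ 0`,
and there `Ψ(γ) = 0` has rank `0`, not `n = 1`. -/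

open MvPolynomial

theorem MvPolynomial.IsHomogeneous.eval_smul {σ R : Type*} [CommSemiring R]
    {φ : MvPolynomial σ R} {n : ℕ} (hφ : φ.IsHomogeneous n) (s : R) (x : σ → R) :
    eval (s • x) φ = s ^ n * eval x φ := by
  rw [eval_eq, eval_eq, Finset.mul_sum]
  refine Finset.sum_congr rfl fun e he => ?_
  have hdeg : ∑ i ∈ e.support, e i = n := by
    simpa [Finsupp.weight_apply, Finsupp.sum] using hφ (mem_support_iff.mp he)
  simp_rw [Pi.smul_apply, smul_eq_mul, mul_pow, Finset.prod_mul_distrib,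
    Finset.prod_pow_eq_pow_sum, hdeg]
  ring

theorem MvPolynomial.eval_eval₂_C {σ R : Type*} [CommSemiring R] (p : MvPolynomial σ R)
    (g : σ → Polynomial R) (t : R) :
    (eval₂ Polynomial.C g p).eval t = eval (fun i => (g i).eval t) p := by
  rw [polynomial_eval_eval₂]
  exact congrArg (eval₂ · _ p) (RingHom.ext fun _ => Polynomial.eval_C)

theorem MvPolynomial.IsHomogeneous.exists_ne_zero_eval_eq_zero {k : Type*} [Field k]
    [IsAlgClosed k] {p : MvPolynomial (Fin 2) k} {D : ℕ} (hp : p.IsHomogeneous D) (hD : 0 < D) :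
    ∃ γ : Fin 2 → k, γ ≠ 0 ∧ eval γ p = 0 := by
  by_contra! hne
  set f : Polynomial k := MvPolynomial.eval₂ Polynomial.C ![1, Polynomial.X] p
  set g : Polynomial k := MvPolynomial.eval₂ Polynomial.C ![Polynomial.X, 1] p
  have hf (t : k) : f.eval t = eval ![1, t] p := by
    rw [eval_eval₂_C]; congr; ext i; fin_cases i <;> simp
  have hg (s : k) : g.eval s = eval ![s, 1] p := by
    rw [eval_eval₂_C]; congr; ext i; fin_cases i <;> simp
  obtain ⟨c, hc⟩ : ∃ c, f = Polynomial.C c :=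
    ⟨_, IsAlgClosed.roots_eq_zero_iff.mp <| Multiset.eq_zero_of_forall_notMem fun t ht =>
      hne ![1, t] (by simp) ((hf t).symm.trans (Polynomial.mem_roots'.mp ht).2)⟩
  -- As `f` is constant, `g(s) = p(s, 1) = s ^ D f(s⁻¹) = c s ^ D`, which vanishes at `s = 0`.
  have hgc : g = Polynomial.C c * Polynomial.X ^ D := by
    refine mul_left_cancel₀ (Polynomial.X_ne_zero (R := k)) (Polynomial.funext fun s => ?_)
    rcases eq_or_ne s 0 with rfl | hs
    · simp
    have hscale : s • ![1, s⁻¹] = ![s, 1] := by ext i; fin_cases i <;> simp [hs]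
    simp only [Polynomial.eval_mul, Polynomial.eval_X, hg, ← hscale, hp.eval_smul, ← hf, hc,
      Polynomial.eval_C, Polynomial.eval_pow]
    ring
  exact hne ![0, 1] (by simp) (by rw [← hg, hgc]; simp [hD.ne'])

theorem carlsson_conj1_of_r_eq_two_general
    (k : Type*) [Field k] [IsAlgClosed k]
    (n N : ℕ) (hn : 1 ≤ n) (hNn : N = 2 * n)
    (d : Fin N → ℤ) (hd : Antitone d)
    (m : ℕ) (hm : 0 < m)
    (Ψ : Matrix (Fin N) (Fin N) (MvPolynomial (Fin 2) k))
    (hupper : ∀ i j : Fin N, ¬ i < j → Ψ i j = 0)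
    (hhom : ∀ i j : Fin N, Ψ i j ≠ 0 →
      (Ψ i j).IsHomogeneous ((m : ℤ) * (d i - d j + 1)).toNat)
    (hrank : ∀ γ : Fin 2 → k, γ ≠ 0 →
      (Ψ.map (MvPolynomial.eval γ)).rank = n) :
    4 ≤ N := by
  by_contra! hN
  obtain rfl : N = 2 := by omega
  obtain rfl : n = 1 := by omega
  have hdeg : 0 < ((m : ℤ) * (d 0 - d 1 + 1)).toNat := by
    have hd₁₀ : d 1 ≤ d 0 := hd (by decide)
    rw [Int.lt_toNat]
    exact mul_pos (by exact_mod_cast hm) (by omega)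
  have hform : (Ψ 0 1).IsHomogeneous ((m : ℤ) * (d 0 - d 1 + 1)).toNat := by
    by_cases h : Ψ 0 1 = 0
    · exact h ▸ isHomogeneous_zero _ _ _
    · exact hhom 0 1 h
  obtain ⟨γ, hγ, hzero⟩ := hform.exists_ne_zero_eval_eq_zero hdeg
  have hΨγ : Ψ.map (eval γ) = 0 := by
    ext i j
    fin_cases i <;> fin_cases j <;> simp [hupper, hzero]
  simpa [hΨγ] using hrank γ hγ

/-- Conjecture 1 (Conjecture `conj1afternotations`) for `r = 2`:
if there is a nonconstant morphism `ψ : ℙ^1_k → V(d) - L(d)`, encoded by an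
`N × N` matrix `Ψ` of polynomials in `2` variables over an algebraically
closed field `k` satisfying conditions (I)-(III), then `N ≥ 4`. -/
theorem carlsson_conj1_of_r_eq_two
    (k : Type*) [Field k] [IsAlgClosed k]
    (n N : ℕ) (hn : 1 ≤ n) (hNn : N = 2 * n)
    (d : Fin N → ℤ) (hd : Antitone d)
    (m : ℕ) (hm : 0 < m)
    (Ψ : Matrix (Fin N) (Fin N) (MvPolynomial (Fin 2) k))
    (hupper : ∀ i j : Fin N, ¬ i < j → Ψ i j = 0)
    (hhom : ∀ i j : Fin N, Ψ i j ≠ 0 →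
      (Ψ i j).IsHomogeneous ((m : ℤ) * (d i - d j + 1)).toNat)
    (hsq : Ψ * Ψ = 0)
    (hrank : ∀ γ : Fin 2 → k, γ ≠ 0 →
      (Ψ.map (MvPolynomial.eval γ)).rank = n) :
    4 ≤ N :=
  carlsson_conj1_of_r_eq_two_general k n N hn hNn d hd m hm Ψ hupper hhom hrank
end

section
/- Let k be an algebraically closed field and let X_1, …, X_r be N×N matrices over k satisfying X_i² = 0 for all i and X_i X_j + X_j X_i = 0 for all i, j. Then there exists an invertible N×N matrix T over k such that T⁻¹ X_i T is upper triangular for every i ∈ {1, …, r}. -/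
/-!
Square-zero, pairwise anticommuting operators have a common kernel vector: if `v` is killed by
`x_i` for `i ∈ s` but `x_a v ≠ 0`, then `x_a v` is killed by `x_a` and by every `x_i`, `i ∈ s`,
because `x_i x_a = -x_a x_i`. Applied to the transposes, this gives a nonzero functional `φ`
vanishing on the range of every `X_i`, so the hyperplane `ker φ` is invariant. Triangularizing
the restricted family on `ker φ` by induction on the dimension and appending a vector outside
`ker φ` gives a basis in which every `X_i` is strictly upper triangular.
-/

open Module Matrix

theorem exists_ne_zero_forall_smul_eq_zero {A M ι : Type*} [Ring A] [AddCommGroup M] [Module A M]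
    [Nontrivial M] [Finite ι] {x : ι → A} (hsq : ∀ i, x i * x i = 0)
    (hanti : ∀ i j, x i * x j + x j * x i = 0) :
    ∃ v : M, v ≠ 0 ∧ ∀ i, x i • v = 0 := by
  classical
  have := Fintype.ofFinite ι
  suffices ∀ s : Finset ι, ∃ v : M, v ≠ 0 ∧ ∀ i ∈ s, x i • v = 0 by
    simpa using this Finset.univ
  intro s
  induction s using Finset.induction_on with
  | empty => simpa using exists_ne (0 : M)
  | insert a s _ ih =>
    obtain ⟨v, hv, hsv⟩ := ih
    by_cases hav : x a • v = 0
    · exact ⟨v, hv, Finset.forall_mem_insert .. |>.mpr ⟨hav, hsv⟩⟩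
    refine ⟨x a • v, hav, Finset.forall_mem_insert .. |>.mpr ⟨?_, fun i hi => ?_⟩⟩
    · rw [smul_smul, hsq, zero_smul]
    · rw [smul_smul, eq_neg_of_add_eq_zero_left (hanti i a), neg_smul, mul_smul, hsv i hi,
        smul_zero, neg_zero]

section

variable {K V ι : Type*} [Field K] [AddCommGroup V] [Module K V] {f : ι → Module.End K V}

theorem exists_dual_ne_zero_forall_comp_eq_zero [Nontrivial V] [Finite ι]
    (hsq : ∀ i, f i * f i = 0) (hanti : ∀ i j, f i * f j + f j * f i = 0) :
    ∃ φ : Dual K V, φ ≠ 0 ∧ ∀ i, φ ∘ₗ f i = 0 := by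
  have hmul (i j : ι) : (f i).dualMap * (f j).dualMap = Dual.transpose (f j * f i) :=
    LinearMap.dualMap_comp_dualMap _ _
  obtain ⟨φ, hφ, hφf⟩ := exists_ne_zero_forall_smul_eq_zero (M := Dual K V)
    (x := fun i => (f i).dualMap) (fun i => by rw [hmul, hsq, map_zero])
    (fun i j => by rw [hmul, hmul, ← map_add, add_comm, hanti, map_zero])
  exact ⟨φ, hφ, hφf⟩

theorem Module.Basis.map_flag_le_flag_castSucc {n : ℕ} {H : Submodule K V} (c : Basis (Fin n) K H)
    (b : Basis (Fin (n + 1)) K V) (hbc : ∀ j, b j.castSucc = c j) (l : Fin (n + 1)) :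
    (c.flag l).map H.subtype ≤ b.flag l.castSucc := by
  rw [Submodule.map_le_iff_le_comap, Basis.flag_le_iff]
  intro j hj
  simpa [← hbc] using b.self_mem_flag (Fin.castSucc_lt_castSucc_iff.mpr hj)

theorem exists_basis_forall_apply_mem_flag [Finite ι] [FiniteDimensional K V]
    (hsq : ∀ i, f i * f i = 0) (hanti : ∀ i j, f i * f j + f j * f i = 0) {n : ℕ}
    (hn : finrank K V = n) :
    ∃ b : Basis (Fin n) K V, ∀ i j, f i (b j) ∈ b.flag j.castSucc := by
  induction n generalizing V with
  | zero => exact ⟨finBasisOfFinrankEq K V hn, fun _ j => j.elim0⟩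
  | succ n ih =>
    have : Nontrivial V := Module.nontrivial_of_finrank_eq_succ hn
    obtain ⟨φ, hφ, hφf⟩ := exists_dual_ne_zero_forall_comp_eq_zero hsq hanti
    have hH : finrank K (LinearMap.ker φ) = n := by
      have := φ.finrank_ker_add_one_of_ne_zero hφ; omega
    set H := LinearMap.ker φ
    have hfH (i : ι) (v : V) : f i v ∈ H := LinearMap.congr_fun (hφf i) v
    obtain ⟨c, hc⟩ := ih (f := fun i => (f i).restrict fun v _ => hfH i v)
      (fun i => by ext v; exact LinearMap.congr_fun (hsq i) v)
      (fun i j => by ext v; exact LinearMap.congr_fun (hanti i j) v) hH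
    obtain ⟨y, hy⟩ : ∃ y, φ y ≠ 0 := DFunLike.ne_iff.mp hφ
    have hli : LinearIndependent K (Fin.snoc (H.subtype ∘ c) y : Fin (n + 1) → V) := by
      refine linearIndependent_finSnoc.mpr ⟨c.linearIndependent.map' _ H.ker_subtype, ?_⟩
      rwa [Set.range_comp, Submodule.span_image, c.span_eq, Submodule.map_subtype_top]
    let b := basisOfLinearIndependentOfCardEqFinrank hli (by simp [hn])
    have hbc (j : Fin n) : b j.castSucc = c j := by simp [b]
    refine ⟨b, fun i j => j.lastCases ?_ fun l => ?_⟩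
    · have hby : b (Fin.last n) = y := by simp [b]
      refine c.map_flag_le_flag_castSucc b hbc _ ?_
      simpa [hby] using hfH i y
    · refine c.map_flag_le_flag_castSucc b hbc _ ?_
      rw [hbc]
      exact ⟨_, hc i l, rfl⟩

end

theorem LinearMap.toMatrix_isUpperTriangular_of_apply_mem_flag {R M : Type*} [CommRing R]
    [AddCommGroup M] [Module R M] {n : ℕ} (b : Basis (Fin n) R M) {f : Module.End R M}
    (hf : ∀ j, f (b j) ∈ b.flag j.succ) : (LinearMap.toMatrix b b f).IsUpperTriangular :=
  fun i j hji => by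
    rw [LinearMap.toMatrix_apply]
    exact b.flag_le_ker_coord (Fin.succ_le_castSucc_iff.mpr hji) (hf j)

theorem Module.Basis.inv_mul_mul_toMatrix_eq_toMatrix_toLin' {R n : Type*} [CommRing R] [Fintype n]
    [DecidableEq n] (b : Basis n R (n → R)) (A : Matrix n n R) :
    ((Pi.basisFun R n).toMatrix b)⁻¹ * A * (Pi.basisFun R n).toMatrix b =
      LinearMap.toMatrix b b (toLin' A) := by
  rw [Matrix.inv_eq_left_inv (b.toMatrix_mul_toMatrix_flip _),
    ← basis_toMatrix_mul_linearMap_toMatrix_mul_basis_toMatrix b (Pi.basisFun R n) b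
      (Pi.basisFun R n),
    LinearMap.toMatrix_eq_toMatrix', LinearMap.toMatrix'_toLin']

theorem simultaneous_triangularization_of_square_zero_anticommuting_general
    (k : Type*) [Field k]
    (N r : ℕ)
    (X : Fin r → Matrix (Fin N) (Fin N) k)
    (hsq : ∀ i, X i * X i = 0)
    (hanti : ∀ i j, X i * X j + X j * X i = 0) :
    ∃ T : Matrix (Fin N) (Fin N) k, IsUnit T ∧
      ∀ t : Fin r, ∀ i j : Fin N, j < i → (T⁻¹ * X t * T) i j = 0 := by
  obtain ⟨b, hb⟩ := exists_basis_forall_apply_mem_flag (f := fun t => toLin' (X t))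
    (fun t => by rw [Module.End.mul_eq_comp, ← toLin'_mul, hsq, map_zero])
    (fun s t => by
      rw [Module.End.mul_eq_comp, Module.End.mul_eq_comp, ← toLin'_mul, ← toLin'_mul, ← map_add,
        hanti, map_zero])
    (Module.finrank_fin_fun k)
  have := (Pi.basisFun k (Fin N)).invertibleToMatrix b
  refine ⟨(Pi.basisFun k (Fin N)).toMatrix b, isUnit_of_invertible _, fun t i j hji => ?_⟩
  rw [b.inv_mul_mul_toMatrix_eq_toMatrix_toLin']
  exact LinearMap.toMatrix_isUpperTriangular_of_apply_mem_flag b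
    (fun j => b.flag_mono (Fin.castSucc_le_succ j) (hb t j)) hji

/-- If `X_1, …, X_r` are `N × N` matrices over an algebraically
closed field `k` with `X_i² = 0` for all `i` and `X_i X_j + X_j X_i = 0` for
all `i, j`, then there is an invertible matrix `T` simultaneously conjugating
all the `X_i` to upper triangular matrices. -/
theorem simultaneous_triangularization_of_square_zero_anticommuting
    (k : Type*) [Field k] [IsAlgClosed k]
    (N r : ℕ) (hN : 0 < N) (hr : 0 < r)
    (X : Fin r → Matrix (Fin N) (Fin N) k)
    (hsq : ∀ i, X i * X i = 0)
    (hanti : ∀ i j, X i * X j + X j * X i = 0) :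
    ∃ T : Matrix (Fin N) (Fin N) k, IsUnit T ∧
      ∀ t : Fin r, ∀ i j : Fin N, j < i → (T⁻¹ * X t * T) i j = 0 :=
  simultaneous_triangularization_of_square_zero_anticommuting_general k N r X hsq hanti
end

section
/- If σ ∈ DP(N), written σ = (i_1,j_1)(i_2,j_2)…(i_n,j_n) with i_1 < i_2 < … < i_n and i_t < j_t for all t, then j_p < j_t whenever p < t; that is, j_1 < j_2 < … < j_n (equivalently, no two transpositions of σ are nested, so no move of type III can be applied to σ). -/
open Finset in
/-- Melnikov's formula for the dimension of the Borel orbit of the strictly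
upper triangular square-zero partial permutation matrix corresponding to the
involution `(a 1, b 1)(a 2, b 2)…(a s, b s)` of `{1, …, N}`:
`D_N = N·s + Σ_t (a t - b t) - Σ_t f_t`, where
`f_t = #{p < t : b p < b t} + #{p < t : b p < a t}`. -/
def melnikovDim (N : ℕ) {s : ℕ} (a b : Fin s → ℕ) : ℤ :=
  (N : ℤ) * s + ∑ t, ((a t : ℤ) - (b t : ℤ)) -
    ∑ t : Fin s,
      (((univ.filter fun p : Fin s => p < t ∧ b p < b t).card : ℤ) +
        ((univ.filter fun p : Fin s => p < t ∧ b p < a t).card : ℤ))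

/-!
Deleting the `q`-th transposition lowers Melnikov's dimension by `N + i_q - j_q` minus the
contributions of `q` to the correction terms, namely `f_q` and the terms `p = q` of the `f_t`,
`t > q`. Sorting the elements of `{1, …, N}` below `i_q` and above `j_q` according to whether
they are left or right ends of transpositions turns this drop into `1 + 2 · #{p < q : j_q < j_p}`,
twice the number of transpositions nested over the `q`-th one. So `σ ∈ DP(N)` rules out
nestings, i.e. `j` is increasing.
-/

open Finset Function

lemma card_filter_comp_eq_of_range_eq {ι α : Type*} [Fintype ι] [DecidableEq α] {f : ι → α}
    (hf : Injective f) {s : Finset α} (hs : Set.range f = s) (P : α → Prop) [DecidablePred P] :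
    #{i | P (f i)} = #{x ∈ s | P x} := by
  have hs' : s = univ.image f := by
    rw [← coe_inj, ← hs, coe_image, coe_univ, Set.image_univ]
  rw [hs', filter_image, card_image_of_injective _ hf]

lemma card_filter_sum_type {β γ : Type*} [Fintype β] [Fintype γ] (P : β ⊕ γ → Prop)
    [DecidablePred P] : #{i | P i} = #{i | P (.inl i)} + #{i | P (.inr i)} := by
  simp only [card_filter, Fintype.sum_sum_type]

lemma card_filter_add_card_filter_of_range_sumElim_eq {ι α : Type*} [Fintype ι] [DecidableEq α]
    {a b : ι → α} (hinj : Injective (Sum.elim a b)) {s : Finset α}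
    (hs : Set.range (Sum.elim a b) = s) (P : α → Prop) [DecidablePred P] :
    #{i | P (a i)} + #{i | P (b i)} = #{x ∈ s | P x} := by
  rw [← card_filter_comp_eq_of_range_eq hinj hs, card_filter_sum_type]
  rfl

lemma card_filter_lt_succAbove {n : ℕ} (q : Fin (n + 1)) (t : Fin n) (b : Fin (n + 1) → ℕ)
    (c : ℕ) :
    #{p | p < q.succAbove t ∧ b p < c}
      = (if q < q.succAbove t ∧ b q < c then 1 else 0) + #{p | p < t ∧ b (q.succAbove p) < c} := by
  rw [card_filter, card_filter, Fin.sum_univ_succAbove _ q]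
  simp only [Fin.succAbove_lt_succAbove_iff]

lemma melnikovDim_succAbove {n : ℕ} (N : ℕ) (a b : Fin (n + 1) → ℕ) (q : Fin (n + 1)) :
    melnikovDim N (a ∘ q.succAbove) (b ∘ q.succAbove) =
      melnikovDim N a b - N - a q + b q
        + (#{p | p < q ∧ b p < b q} + #{p | p < q ∧ b p < a q})
        + (#{t | q < t ∧ b q < b t} + #{t | q < t ∧ b q < a t}) := by
  set f : Fin (n + 1) → ℤ := fun t => #{p | p < t ∧ b p < b t} + #{p | p < t ∧ b p < a t}
  set g : Fin (n + 1) → ℤ := fun t =>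
    (if q < t ∧ b q < b t then 1 else 0) + (if q < t ∧ b q < a t then 1 else 0)
  have hg : ∑ t, g t = #{t | q < t ∧ b q < b t} + #{t | q < t ∧ b q < a t} := by
    simp only [g, sum_add_distrib, sum_boole]
  have hgq : g q = 0 := by simp [g]
  have hfg (t : Fin n) : (#{p | p < t ∧ b (q.succAbove p) < b (q.succAbove t)} : ℤ)
      + #{p | p < t ∧ b (q.succAbove p) < a (q.succAbove t)}
      = f (q.succAbove t) - g (q.succAbove t) := by
    simp only [f, g, card_filter_lt_succAbove]
    push_cast
    ring
  have hdiff := Fin.sum_univ_succAbove (fun t => (a t : ℤ) - b t) q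
  have hf := Fin.sum_univ_succAbove f q
  have hg' := Fin.sum_univ_succAbove g q
  simp only [f] at hf
  simp only [melnikovDim, comp_apply, hfg, sum_sub_distrib] at hdiff ⊢
  push_cast
  linarith

section Arcs

variable {m N : ℕ} {a b : Fin m → ℕ}

def nestingCount (b : Fin m → ℕ) (q : Fin m) : ℕ := #{p | p < q ∧ b q < b p}

lemma nestingCount_eq_zero_iff {q : Fin m} : nestingCount b q = 0 ↔ ∀ p < q, b p ≤ b q := by
  simp [nestingCount, filter_eq_empty_iff]

lemma card_filter_lt_add_nestingCount (hb : Injective b) (q : Fin m) :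
    #{p | p < q ∧ b p < b q} + nestingCount b q = q := by
  have hq : #{p | p < q} = q := by rw [filter_gt_eq_Iio, Fin.card_Iio]
  rw [← hq, nestingCount, card_filter, card_filter, card_filter, ← sum_add_distrib]
  refine sum_congr rfl fun p _ => ?_
  have : p ≠ q → b p ≠ b q := mt (@hb p q)
  split_ifs <;> omega

lemma card_filter_gt_eq_add_nestingCount (q : Fin m) :
    #{t | b q < b t} = #{t | q < t ∧ b q < b t} + nestingCount b q := by
  rw [nestingCount, card_filter, card_filter, card_filter, ← sum_add_distrib]
  refine sum_congr rfl fun t _ => ?_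
  have : t = q → b t = b q := congrArg b
  split_ifs <;> omega

lemma apply_eq_add_card_filter_lt (ha : StrictMono a) (hinj : Injective (Sum.elim a b))
    (hrange : Set.range (Sum.elim a b) = Set.Icc 1 N) (q : Fin m) :
    a q = q + #{p | b p < a q} + 1 := by
  obtain ⟨haq, haN⟩ : a q ∈ Set.Icc 1 N := hrange ▸ Set.mem_range_self (Sum.inl q)
  have hcover := card_filter_add_card_filter_of_range_sumElim_eq hinj
    (hrange.trans (coe_Icc 1 N).symm) (· < a q)
  have hIco : #{x ∈ Icc 1 N | x < a q} = a q - 1 := by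
    rw [← Nat.card_Ico]; congr 1; ext x; simp only [mem_filter, mem_Icc, mem_Ico]; omega
  have hlt : #{t | a t < a q} = q := by
    simp only [ha.lt_iff_lt]; rw [filter_gt_eq_Iio, Fin.card_Iio]
  omega

lemma card_filter_gt_add_apply_eq (hinj : Injective (Sum.elim a b))
    (hrange : Set.range (Sum.elim a b) = Set.Icc 1 N) (q : Fin m) :
    #{t | b q < a t} + #{t | b q < b t} + b q = N := by
  obtain ⟨-, hbN⟩ : b q ∈ Set.Icc 1 N := hrange ▸ Set.mem_range_self (Sum.inr q)
  have hcover := card_filter_add_card_filter_of_range_sumElim_eq hinj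
    (hrange.trans (coe_Icc 1 N).symm) (b q < ·)
  have hIoc : #{x ∈ Icc 1 N | b q < x} = N - b q := by
    rw [← Nat.card_Ioc]; congr 1; ext x; simp only [mem_filter, mem_Icc, mem_Ioc]; omega
  omega

end Arcs

lemma melnikovDim_sub_melnikovDim_succAbove {n N : ℕ} {a b : Fin (n + 1) → ℕ}
    (ha : StrictMono a) (hab : ∀ t, a t < b t) (hinj : Injective (Sum.elim a b))
    (hrange : Set.range (Sum.elim a b) = Set.Icc 1 N) (q : Fin (n + 1)) :
    melnikovDim N a b - melnikovDim N (a ∘ q.succAbove) (b ∘ q.succAbove) =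
      2 * nestingCount b q + 1 := by
  have hb : Injective b := hinj.comp Sum.inr_injective
  have lt_of_right_lt_left {p t} (h : b p < a t) : p < t := ha.lt_iff_lt.mp ((hab p).trans h)
  have hbelow : #{p | p < q ∧ b p < a q} = #{p | b p < a q} :=
    congrArg card <| filter_congr fun p _ => and_iff_right_of_imp lt_of_right_lt_left
  have habove : #{t | q < t ∧ b q < a t} = #{t | b q < a t} :=
    congrArg card <| filter_congr fun t _ => and_iff_right_of_imp lt_of_right_lt_left
  have := apply_eq_add_card_filter_lt ha hinj hrange q
  have := card_filter_gt_add_apply_eq hinj hrange q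
  have := card_filter_lt_add_nestingCount hb q
  have := card_filter_gt_eq_add_nestingCount (b := b) q
  have := melnikovDim_succAbove N a b q
  omega

theorem strictMono_of_mem_DP_general
    (n N : ℕ)
    (a b : Fin (n + 1) → ℕ)
    (ha : StrictMono a)
    (hab : ∀ t, a t < b t)
    (hinj : Function.Injective (Sum.elim a b))
    (hrange : Set.range (Sum.elim a b) = Set.Icc 1 N)
    (hDP : ∀ q : Fin (n + 1),
      melnikovDim N (a ∘ q.succAbove) (b ∘ q.succAbove) = melnikovDim N a b - 1) :
    StrictMono b := by
  intro p t hpt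
  have hnest : nestingCount b t = 0 := by
    have := melnikovDim_sub_melnikovDim_succAbove ha hab hinj hrange t
    have := hDP t
    omega
  have hb : Injective b := hinj.comp Sum.inr_injective
  exact (nestingCount_eq_zero_iff.mp hnest p hpt).lt_of_ne (hb.ne hpt.ne)

open Finset in
/-- first half of Proposition `propDPN`: Let `N = 2·(n+1)` and
let `σ = (a 0, b 0)…(a n, b n)` be a fixed-point-free involution of
`{1, …, N}` (a product of `n+1` disjoint transpositions covering `{1, …, N}`,
with `a` strictly increasing and `a t < b t` for all `t`).  If `σ ∈ DP(N)`,
i.e. deleting any single transposition drops the Melnikov dimension by exactly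
`1`, then `b` is strictly increasing: `b p < b t` whenever `p < t` (so no move
of type III applies to `σ`). -/
theorem strictMono_of_mem_DP
    (n N : ℕ) (hN : N = 2 * (n + 1))
    (a b : Fin (n + 1) → ℕ)
    (ha : StrictMono a)
    (hab : ∀ t, a t < b t)
    (hinj : Function.Injective (Sum.elim a b))
    (hrange : Set.range (Sum.elim a b) = Set.Icc 1 N)
    (hDP : ∀ q : Fin (n + 1),
      melnikovDim N (a ∘ q.succAbove) (b ∘ q.succAbove) = melnikovDim N a b - 1) :
    StrictMono b :=
  strictMono_of_mem_DP_general n N a b ha hab hinj hrange hDP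
end

section
/- Let σ ∈ RP(N) be written σ = (i_1,j_1)(i_2,j_2)…(i_n,j_n) with i_1 < i_2 < … < i_n and i_t < j_t for all t. If j_1 < j_2 < … < j_n (equivalently, no move of type III can be applied to σ), then σ ∈ DP(N); that is, for every q ∈ {1,…,n}, removing the q-th transposition from σ yields an involution σ' with D_N(σ') = D_N(σ) − 1. -/
open Finset in
lemma filter_succAbove_card {n : ℕ} (q : Fin (n+1)) (t' : Fin n)
    (R : Fin (n+1) → Prop) [DecidablePred R] :
    ((univ.filter fun p : Fin (n+1) => p < q.succAbove t' ∧ R p).card : ℤ)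
    = (univ.filter fun p' : Fin n => p' < t' ∧ R (q.succAbove p')).card
      + (if q < q.succAbove t' ∧ R q then 1 else 0) := by
  have hsplit := Finset.card_filter_add_card_filter_not
    (s := univ.filter fun p : Fin (n+1) => p < q.succAbove t' ∧ R p) (p := fun p => p = q)
  rw [Finset.filter_filter, Finset.filter_filter] at hsplit
  have h1 : (univ.filter fun p : Fin (n+1) => (p < q.succAbove t' ∧ R p) ∧ p = q).card
      = if q < q.succAbove t' ∧ R q then 1 else 0 := by
    split_ifs with h
    · rw [Finset.card_eq_one]
      refine ⟨q, ?_⟩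
      ext p
      simp only [mem_filter, mem_univ, true_and, mem_singleton]
      constructor
      · rintro ⟨-, rfl⟩; rfl
      · rintro rfl; exact ⟨⟨h.1, h.2⟩, rfl⟩
    · rw [Finset.card_eq_zero, Finset.filter_eq_empty_iff]
      intro p _
      rintro ⟨hp, rfl⟩
      exact h hp
  have himg : ((univ.filter fun p' : Fin n => p' < t' ∧ R (q.succAbove p')).image q.succAbove)
      = univ.filter fun p : Fin (n+1) => (p < q.succAbove t' ∧ R p) ∧ ¬ p = q := by
    ext p
    simp only [mem_image, mem_filter, mem_univ, true_and]
    constructor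
    · rintro ⟨p', ⟨h1', h2'⟩, rfl⟩
      exact ⟨⟨Fin.succAbove_lt_succAbove_iff.2 h1', h2'⟩, Fin.succAbove_ne q p'⟩
    · rintro ⟨⟨h1', h2'⟩, hne⟩
      obtain ⟨p', rfl⟩ := Fin.exists_succAbove_eq hne
      exact ⟨p', ⟨Fin.succAbove_lt_succAbove_iff.1 h1', h2'⟩, rfl⟩
  have h2 : (univ.filter fun p : Fin (n+1) => (p < q.succAbove t' ∧ R p) ∧ ¬ p = q).card
      = (univ.filter fun p' : Fin n => p' < t' ∧ R (q.succAbove p')).card := by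
    rw [← himg, Finset.card_image_of_injective _ Fin.succAbove_right_injective]
  split_ifs at h1 ⊢ <;> omega

open Finset in
lemma sum_succAbove_card {n : ℕ} (q : Fin (n+1))
    (R : Fin (n+1) → Fin (n+1) → Prop) [∀ p t, Decidable (R p t)] :
    (∑ t' : Fin n,
      ((univ.filter fun p' : Fin n => p' < t' ∧ R (q.succAbove p') (q.succAbove t')).card : ℤ))
    = ∑ t : Fin (n+1), ((univ.filter fun p : Fin (n+1) => p < t ∧ R p t).card : ℤ)
      - (univ.filter fun p : Fin (n+1) => p < q ∧ R p q).card
      - (univ.filter fun t : Fin (n+1) => q < t ∧ R q t).card := by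
  have key : ∀ t' : Fin n,
      ((univ.filter fun p' : Fin n => p' < t' ∧ R (q.succAbove p') (q.succAbove t')).card : ℤ)
      = ((univ.filter fun p : Fin (n+1) => p < q.succAbove t' ∧ R p (q.succAbove t')).card : ℤ)
        - (if q < q.succAbove t' ∧ R q (q.succAbove t') then 1 else 0) := by
    intro t'
    have := filter_succAbove_card q t' (fun p => R p (q.succAbove t'))
    linarith
  rw [Finset.sum_congr rfl fun t' _ => key t', Finset.sum_sub_distrib]
  have hg := Fin.sum_univ_succAbove
    (fun t : Fin (n+1) => ((univ.filter fun p : Fin (n+1) => p < t ∧ R p t).card : ℤ)) q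
  have hi := Fin.sum_univ_succAbove
    (fun t : Fin (n+1) => if q < t ∧ R q t then (1 : ℤ) else 0) q
  have hiq : (if q < q ∧ R q q then (1 : ℤ) else 0) = 0 := by simp
  have hsum : ∑ t : Fin (n+1), (if q < t ∧ R q t then (1 : ℤ) else 0)
      = (univ.filter fun t : Fin (n+1) => q < t ∧ R q t).card := by
    simp [Finset.sum_boole]
  simp only [hiq] at hi
  rw [hsum] at hi
  linarith [hg, hi]


open Finset in
/-- second half of Proposition `propDPN`: Let `N = 2·(n+1)` and
let `σ = (a 0, b 0)…(a n, b n)` be a fixed-point-free involution of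
`{1, …, N}` (a product of `n+1` disjoint transpositions covering `{1, …, N}`,
with `a` strictly increasing and `a t < b t` for all `t`).  If `b` is strictly
increasing (no move of type III applies to `σ`), then `σ ∈ DP(N)`: deleting
any single transposition drops the Melnikov dimension by exactly `1`. -/
theorem mem_DP_of_strictMono
    (n N : ℕ) (hN : N = 2 * (n + 1))
    (a b : Fin (n + 1) → ℕ)
    (ha : StrictMono a)
    (hab : ∀ t, a t < b t)
    (hinj : Function.Injective (Sum.elim a b))
    (hrange : Set.range (Sum.elim a b) = Set.Icc 1 N)
    (hb : StrictMono b) :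
    ∀ q : Fin (n + 1),
      melnikovDim N (a ∘ q.succAbove) (b ∘ q.succAbove) = melnikovDim N a b - 1 := by
  intro q
  have hne : ∀ t s : Fin (n+1), a t ≠ b s := by
    intro t s h
    have := hinj (a₁ := Sum.inl t) (a₂ := Sum.inr s) (by simpa using h)
    simp at this
  have hbd : ∀ t, 1 ≤ a t ∧ a t ≤ N := by
    intro t
    have : a t ∈ Set.Icc 1 N := by rw [← hrange]; exact ⟨Sum.inl t, rfl⟩
    exact this
  have hbd' : ∀ t, 1 ≤ b t ∧ b t ≤ N := by
    intro t
    have : b t ∈ Set.Icc 1 N := by rw [← hrange]; exact ⟨Sum.inr t, rfl⟩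
    exact this
  -- the four cardinalities
  set K := univ.filter fun t : Fin (n+1) => q < t ∧ b q < a t with hK
  set C := univ.filter fun p : Fin (n+1) => p < q ∧ b p < a q with hC
  set A := univ.filter fun t : Fin (n+1) => q < t ∧ a t < b q with hA
  set B := univ.filter fun p : Fin (n+1) => p < q ∧ a q < b p with hB
  have hcardIoi : (univ.filter fun t : Fin (n+1) => q < t).card = n - q.val := by
    have : (univ.filter fun t : Fin (n+1) => q < t) = Finset.Ioi q := by
      ext t; simp
    rw [this, Fin.card_Ioi]
    omega
  have hcardIio : (univ.filter fun p : Fin (n+1) => p < q).card = q.val := by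
    have : (univ.filter fun p : Fin (n+1) => p < q) = Finset.Iio q := by
      ext t; simp
    rw [this, Fin.card_Iio]
  have hAK : A.card + K.card = n - q.val := by
    have hsplit := Finset.card_filter_add_card_filter_not
      (s := univ.filter fun t : Fin (n+1) => q < t) (p := fun t => a t < b q)
    rw [Finset.filter_filter, Finset.filter_filter] at hsplit
    have : (univ.filter fun t : Fin (n+1) => q < t ∧ ¬ a t < b q) = K := by
      rw [hK]
      apply Finset.filter_congr
      intro t _
      have := hne t q
      constructor
      · rintro ⟨h1, h2⟩; exact ⟨h1, by omega⟩
      · rintro ⟨h1, h2⟩; exact ⟨h1, by omega⟩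
    rw [this, hcardIoi] at hsplit
    rw [hA]
    omega
  have hBC : B.card + C.card = q.val := by
    have hsplit := Finset.card_filter_add_card_filter_not
      (s := univ.filter fun p : Fin (n+1) => p < q) (p := fun p => a q < b p)
    rw [Finset.filter_filter, Finset.filter_filter] at hsplit
    have : (univ.filter fun p : Fin (n+1) => p < q ∧ ¬ a q < b p) = C := by
      rw [hC]
      apply Finset.filter_congr
      intro p _
      have := hne q p
      constructor
      · rintro ⟨h1, h2⟩; exact ⟨h1, by omega⟩
      · rintro ⟨h1, h2⟩; exact ⟨h1, by omega⟩
    rw [this, hcardIio] at hsplit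
    rw [hB]
    omega
  -- the interval decomposition
  have hIoo : Finset.Ioo (a q) (b q) = A.image a ∪ B.image b := by
    ext x
    simp only [Finset.mem_Ioo, Finset.mem_union, Finset.mem_image, hA, hB,
      Finset.mem_filter, Finset.mem_univ, true_and]
    constructor
    · rintro ⟨h1, h2⟩
      have hx : x ∈ Set.Icc 1 N := by
        have := (hbd q).1
        have := (hbd' q).2
        exact ⟨by omega, by omega⟩
      rw [← hrange] at hx
      obtain ⟨y, hy⟩ := hx
      cases y with
      | inl t =>
        simp only [Sum.elim_inl] at hy
        subst hy
        exact Or.inl ⟨t, ⟨ha.lt_iff_lt.1 h1, h2⟩, rfl⟩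
      | inr t =>
        simp only [Sum.elim_inr] at hy
        subst hy
        exact Or.inr ⟨t, ⟨hb.lt_iff_lt.1 h2, h1⟩, rfl⟩
    · rintro (⟨t, ⟨h1, h2⟩, rfl⟩ | ⟨t, ⟨h1, h2⟩, rfl⟩)
      · exact ⟨ha h1, h2⟩
      · exact ⟨h2, hb h1⟩
  have hIooCard : A.card + B.card = b q - a q - 1 := by
    have hdisj : Disjoint (A.image a) (B.image b) := by
      rw [Finset.disjoint_left]
      rintro x hx hy
      simp only [Finset.mem_image] at hx hy
      obtain ⟨t, -, rfl⟩ := hx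
      obtain ⟨s, -, hs⟩ := hy
      exact hne t s hs.symm
    have := Finset.card_union_of_disjoint hdisj
    rw [← hIoo, Nat.card_Ioo,
      Finset.card_image_of_injective _ ha.injective,
      Finset.card_image_of_injective _ hb.injective] at this
    omega
  -- the key counting identity
  have hkey : (K.card : ℤ) + C.card = n + 1 + a q - b q := by
    have h1 := hab q
    have h2 : q.val ≤ n := Nat.lt_succ_iff.1 q.isLt
    omega
  -- second components via hb
  have hbb1 : (univ.filter fun p : Fin (n+1) => p < q ∧ b p < b q).card = q.val := by
    rw [← hcardIio]
    congr 1
    apply Finset.filter_congr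
    intro p _
    exact ⟨fun h => h.1, fun h => ⟨h, hb h⟩⟩
  have hbb2 : (univ.filter fun t : Fin (n+1) => q < t ∧ b q < b t).card = n - q.val := by
    rw [← hcardIoi]
    congr 1
    apply Finset.filter_congr
    intro t _
    exact ⟨fun h => h.1, fun h => ⟨h, hb h⟩⟩
  -- now compute
  have hsum1 := sum_succAbove_card (n := n) q (fun p t => b p < b t)
  have hsum2 := sum_succAbove_card (n := n) q (fun p t => b p < a t)
  have hab' := Fin.sum_univ_succAbove (fun t : Fin (n+1) => ((a t : ℤ) - (b t : ℤ))) q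
  have hq2 : q.val ≤ n := Nat.lt_succ_iff.1 q.isLt
  have habq := hab q
  simp only [melnikovDim, Function.comp_apply, Finset.sum_add_distrib]
  rw [hsum1, hsum2, hab']
  rw [hbb1, hbb2] at *
  push_cast [hN]
  push_cast [hbb1, hbb2] at hkey hsum1 hsum2 ⊢
  have : ((n - q.val : ℕ) : ℤ) = (n : ℤ) - q.val := by omega
  rw [this]
  linarith
end

section
/- Let N = 2n with n ≥ 2 (so N ≠ 2), and let σ ∈ RP(N) be a fixed-point-free involution of {1,…,N} containing the transposition (1, N), i.e. σ(1) = N. Then σ ∉ DP(N). -/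
open Finset in
private lemma card_filter_split {m : ℕ} (q : Fin (m + 1)) (P : Fin (m + 1) → Prop)
    [DecidablePred P] :
    (univ.filter P).card
      = (univ.filter fun p : Fin m => P (q.succAbove p)).card + (if P q then 1 else 0) := by
  rw [Finset.card_filter, Finset.card_filter,
    Fin.sum_univ_succAbove (fun t => if P t then 1 else 0) q, add_comm]

private lemma fin_zero_lt_one {m : ℕ} : (0 : Fin (m + 2)) < 1 := by
  simp only [Fin.lt_iff_val_lt_val, Fin.val_zero, Fin.val_one]
  omega

private lemma fin_eq_zero_of_lt_one {m : ℕ} {t : Fin (m + 2)} (h : t < 1) : t = 0 := by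
  simp only [Fin.lt_iff_val_lt_val, Fin.val_one] at h
  apply Fin.ext
  simp only [Fin.val_zero]
  omega

private lemma fin_one_le_of_ne_zero {m : ℕ} {t : Fin (m + 2)} (h : t ≠ 0) :
    (1 : Fin (m + 2)) ≤ t := by
  simp only [ne_eq, Fin.ext_iff, Fin.val_zero] at h
  simp only [Fin.le_iff_val_le_val, Fin.val_one]
  omega

private lemma fin_one_lt_of_ne {m : ℕ} {t : Fin (m + 2)} (h0 : t ≠ 0) (h1 : t ≠ 1) :
    (1 : Fin (m + 2)) < t := by
  simp only [ne_eq, Fin.ext_iff, Fin.val_zero, Fin.val_one] at h0 h1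
  simp only [Fin.lt_iff_val_lt_val, Fin.val_one]
  omega

private lemma fin_one_ne_zero' {m : ℕ} : (1 : Fin (m + 2)) ≠ 0 := by
  simp only [ne_eq, Fin.ext_iff, Fin.val_zero, Fin.val_one]
  omega

private lemma fin_not_one_lt_zero {m : ℕ} : ¬ (1 : Fin (m + 2)) < 0 := by
  simp only [Fin.lt_iff_val_lt_val, Fin.val_zero, Fin.val_one]
  omega

open Finset in
/-- Lemma `lemmaforpropnomove3`: Let `N = 2·(n+2)` (so `N ≠ 2`,
i.e. the number of transpositions is `n + 2 ≥ 2`) and let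
`σ = (a 0, b 0)…(a (n+1), b (n+1))` be a fixed-point-free involution of
`{1, …, N}` (a product of `n+2` disjoint transpositions covering `{1, …, N}`,
with `a` strictly increasing and `a t < b t` for all `t`).  If the
transposition `(1, N)` appears in `σ`, then `σ ∉ DP(N)`: it is not the case
that deleting any single transposition drops the Melnikov dimension by
exactly `1`. -/
theorem not_mem_DP_of_one_N
    (n N : ℕ) (hN : N = 2 * (n + 2))
    (a b : Fin (n + 2) → ℕ)
    (ha : StrictMono a)
    (hab : ∀ t, a t < b t)
    (hinj : Function.Injective (Sum.elim a b))
    (hrange : Set.range (Sum.elim a b) = Set.Icc 1 N)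
    (ha0 : a 0 = 1) (hb0 : b 0 = N) :
    ¬ ∀ q : Fin (n + 2),
      melnikovDim N (a ∘ q.succAbove) (b ∘ q.succAbove) = melnikovDim N a b - 1 := by
  intro h
  have h1 := h 1
  -- basic injectivity / range facts
  have hainj : Function.Injective a := ha.injective
  have hbinj : Function.Injective b := by
    intro t t' htt
    have := hinj (a₁ := Sum.inr t) (a₂ := Sum.inr t') htt
    simpa using this
  have hane : ∀ t t', a t ≠ b t' := by
    intro t t' htt
    have := hinj (a₁ := Sum.inl t) (a₂ := Sum.inr t') htt
    simp at this
  have hamem : ∀ t, 1 ≤ a t ∧ a t ≤ N := by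
    intro t
    have : a t ∈ Set.range (Sum.elim a b) := ⟨Sum.inl t, rfl⟩
    rw [hrange, Set.mem_Icc] at this
    exact this
  have hbmem : ∀ t, 1 ≤ b t ∧ b t ≤ N := by
    intro t
    have : b t ∈ Set.range (Sum.elim a b) := ⟨Sum.inr t, rfl⟩
    rw [hrange, Set.mem_Icc] at this
    exact this
  have hsurj : ∀ x : ℕ, 1 ≤ x → x ≤ N → (∃ t, a t = x) ∨ (∃ t, b t = x) := by
    intro x h1x hxN
    have : x ∈ Set.range (Sum.elim a b) := by rw [hrange]; exact Set.mem_Icc.2 ⟨h1x, hxN⟩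
    obtain ⟨u, hu⟩ := this
    cases u with
    | inl t => exact Or.inl ⟨t, hu⟩
    | inr t => exact Or.inr ⟨t, hu⟩
  have hN4 : 4 ≤ N := by omega
  have ha1 : a 1 = 2 := by
    rcases hsurj 2 (by omega) (by omega) with ⟨t, ht⟩ | ⟨t, ht⟩
    · have ht0 : t ≠ 0 := by
        intro h0; rw [h0, ha0] at ht; omega
      have h1t : (1 : Fin (n + 2)) ≤ t := fin_one_le_of_ne_zero ht0
      have h01 : a 0 < a 1 := ha fin_zero_lt_one
      have := ha.monotone h1t
      omega
    · have hlt := hab t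
      have h1a := (hamem t).1
      have hat : a t = 1 := by omega
      have ht0 : t = 0 := hainj (by rw [hat, ha0])
      rw [ht0, hb0] at ht
      omega
  have hb1 : 2 < b 1 := by have := hab 1; omega
  have hb1N : b 1 < N := by
    have hle := (hbmem 1).2
    have hne : b 1 ≠ N := by
      intro hh
      exact fin_one_ne_zero' (hbinj (by rw [hh, hb0]))
    omega
  -- the two counting sets
  set B : Finset (Fin (n + 2)) := univ.filter (fun t => 1 < t ∧ b 1 < b t) with hB
  set A : Finset (Fin (n + 2)) := univ.filter (fun t => 1 < t ∧ b 1 < a t) with hA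
  have hcard : B.card + A.card = N - b 1 - 1 := by
    have himg : B.image b ∪ A.image a = Finset.Ioo (b 1) N := by
      ext x
      simp only [Finset.mem_union, Finset.mem_image, hB, hA, Finset.mem_filter,
        Finset.mem_univ, true_and, Finset.mem_Ioo]
      constructor
      · rintro (⟨t, ⟨h1t, hbt⟩, rfl⟩ | ⟨t, ⟨h1t, hat⟩, rfl⟩)
        · refine ⟨hbt, ?_⟩
          have h2 := (hbmem t).2
          have hne : b t ≠ N := by
            intro hh
            have ht0 : t = 0 := hbinj (by rw [hh, hb0])
            rw [ht0] at h1t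
            exact fin_not_one_lt_zero h1t
          omega
        · exact lt_of_lt_of_le (hab t) (hbmem t).2 |> fun h2 => ⟨hat, h2⟩
      · rintro ⟨hx1, hx2⟩
        rcases hsurj x (by omega) (by omega) with ⟨t, rfl⟩ | ⟨t, rfl⟩
        · right
          refine ⟨t, ⟨?_, hx1⟩, rfl⟩
          have ht0 : t ≠ 0 := by intro hh; rw [hh, ha0] at hx1; omega
          have ht1 : t ≠ 1 := by intro hh; rw [hh, ha1] at hx1; omega
          exact fin_one_lt_of_ne ht0 ht1
        · left
          refine ⟨t, ⟨?_, hx1⟩, rfl⟩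
          have ht0 : t ≠ 0 := by intro hh; rw [hh, hb0] at hx2; omega
          have ht1 : t ≠ 1 := by intro hh; rw [hh] at hx1; omega
          exact fin_one_lt_of_ne ht0 ht1
    have hdisj : Disjoint (B.image b) (A.image a) := by
      rw [Finset.disjoint_left]
      rintro x hx hx'
      simp only [Finset.mem_image] at hx hx'
      obtain ⟨t, _, rfl⟩ := hx
      obtain ⟨t', _, h'⟩ := hx'
      exact hane t' t h'
    have hc := congrArg Finset.card himg
    rw [Finset.card_union_of_disjoint hdisj, Finset.card_image_of_injective _ hbinj,
      Finset.card_image_of_injective _ hainj, Nat.card_Ioo] at hc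
    omega
  -- key dimension computation
  have key : melnikovDim N (a ∘ (1 : Fin (n + 2)).succAbove) (b ∘ (1 : Fin (n + 2)).succAbove)
      = melnikovDim N a b - 3 := by
    unfold melnikovDim
    simp only [Function.comp_apply]
    have hsum1 : ∑ t : Fin (n + 2), ((a t : ℤ) - b t)
        = ((a 1 : ℤ) - b 1) +
          ∑ t : Fin (n + 1),
            ((a ((1 : Fin (n + 2)).succAbove t) : ℤ) - b ((1 : Fin (n + 2)).succAbove t)) :=
      Fin.sum_univ_succAbove _ 1
    have hF1b : (univ.filter fun p : Fin (n + 2) => p < 1 ∧ b p < b 1) = ∅ := by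
      rw [Finset.filter_eq_empty_iff]
      rintro p -
      rintro ⟨hp1, hpb⟩
      have hp0 : p = 0 := fin_eq_zero_of_lt_one hp1
      rw [hp0, hb0] at hpb
      have := (hbmem 1).2
      omega
    have hF1a : (univ.filter fun p : Fin (n + 2) => p < 1 ∧ b p < a 1) = ∅ := by
      rw [Finset.filter_eq_empty_iff]
      rintro p -
      rintro ⟨hp1, hpb⟩
      have hp0 : p = 0 := fin_eq_zero_of_lt_one hp1
      rw [hp0, hb0, ha1] at hpb
      omega
    have hstepb : ∀ t' : Fin (n + 1),
        ((univ.filter fun p : Fin (n + 2) =>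
            p < (1 : Fin (n + 2)).succAbove t' ∧ b p < b ((1 : Fin (n + 2)).succAbove t')).card : ℤ)
        = ((univ.filter fun p : Fin (n + 1) =>
            p < t' ∧ b ((1 : Fin (n + 2)).succAbove p) < b ((1 : Fin (n + 2)).succAbove t')).card : ℤ)
          + (if 1 < (1 : Fin (n + 2)).succAbove t' ∧ b 1 < b ((1 : Fin (n + 2)).succAbove t')
              then 1 else 0) := by
      intro t'
      rw [card_filter_split (1 : Fin (n + 2))
        (fun p => p < (1 : Fin (n + 2)).succAbove t' ∧ b p < b ((1 : Fin (n + 2)).succAbove t'))]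
      simp only [Fin.succAbove_lt_succAbove_iff]
      push_cast
      split <;> simp
    have hstepa : ∀ t' : Fin (n + 1),
        ((univ.filter fun p : Fin (n + 2) =>
            p < (1 : Fin (n + 2)).succAbove t' ∧ b p < a ((1 : Fin (n + 2)).succAbove t')).card : ℤ)
        = ((univ.filter fun p : Fin (n + 1) =>
            p < t' ∧ b ((1 : Fin (n + 2)).succAbove p) < a ((1 : Fin (n + 2)).succAbove t')).card : ℤ)
          + (if 1 < (1 : Fin (n + 2)).succAbove t' ∧ b 1 < a ((1 : Fin (n + 2)).succAbove t')
              then 1 else 0) := by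
      intro t'
      rw [card_filter_split (1 : Fin (n + 2))
        (fun p => p < (1 : Fin (n + 2)).succAbove t' ∧ b p < a ((1 : Fin (n + 2)).succAbove t'))]
      simp only [Fin.succAbove_lt_succAbove_iff]
      push_cast
      split <;> simp
    have hBcount : ∑ t' : Fin (n + 1),
        (if 1 < (1 : Fin (n + 2)).succAbove t' ∧ b 1 < b ((1 : Fin (n + 2)).succAbove t')
          then (1 : ℤ) else 0) = (B.card : ℤ) := by
      rw [Finset.sum_boole]
      have := card_filter_split (1 : Fin (n + 2)) (fun t => 1 < t ∧ b 1 < b t)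
      simp only [lt_self_iff_false, false_and, if_false, add_zero] at this
      rw [hB, this]
    have hAcount : ∑ t' : Fin (n + 1),
        (if 1 < (1 : Fin (n + 2)).succAbove t' ∧ b 1 < a ((1 : Fin (n + 2)).succAbove t')
          then (1 : ℤ) else 0) = (A.card : ℤ) := by
      rw [Finset.sum_boole]
      have := card_filter_split (1 : Fin (n + 2)) (fun t => 1 < t ∧ b 1 < a t)
      simp only [lt_self_iff_false, false_and, if_false, add_zero] at this
      rw [hA, this]
    have hsum2 : ∑ t : Fin (n + 2),
          (((univ.filter fun p : Fin (n + 2) => p < t ∧ b p < b t).card : ℤ) +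
            ((univ.filter fun p : Fin (n + 2) => p < t ∧ b p < a t).card : ℤ))
        = ∑ t : Fin (n + 1),
            (((univ.filter fun p : Fin (n + 1) => p < t ∧
                b ((1 : Fin (n + 2)).succAbove p) < b ((1 : Fin (n + 2)).succAbove t)).card : ℤ) +
              ((univ.filter fun p : Fin (n + 1) => p < t ∧
                b ((1 : Fin (n + 2)).succAbove p) < a ((1 : Fin (n + 2)).succAbove t)).card : ℤ))
          + (B.card : ℤ) + (A.card : ℤ) := by
      rw [Fin.sum_univ_succAbove (fun t : Fin (n + 2) =>
        (((univ.filter fun p : Fin (n + 2) => p < t ∧ b p < b t).card : ℤ) +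
          ((univ.filter fun p : Fin (n + 2) => p < t ∧ b p < a t).card : ℤ))) 1]
      rw [hF1b, hF1a]
      simp only [Finset.card_empty, Nat.cast_zero, add_zero, zero_add]
      have hcongr : ∑ t' : Fin (n + 1),
          (((univ.filter fun p : Fin (n + 2) =>
              p < (1 : Fin (n + 2)).succAbove t' ∧
                b p < b ((1 : Fin (n + 2)).succAbove t')).card : ℤ) +
            ((univ.filter fun p : Fin (n + 2) =>
              p < (1 : Fin (n + 2)).succAbove t' ∧
                b p < a ((1 : Fin (n + 2)).succAbove t')).card : ℤ))
          = ∑ t' : Fin (n + 1),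
            ((((univ.filter fun p : Fin (n + 1) => p < t' ∧
                b ((1 : Fin (n + 2)).succAbove p) <
                  b ((1 : Fin (n + 2)).succAbove t')).card : ℤ) +
              ((univ.filter fun p : Fin (n + 1) => p < t' ∧
                b ((1 : Fin (n + 2)).succAbove p) <
                  a ((1 : Fin (n + 2)).succAbove t')).card : ℤ)) +
            ((if 1 < (1 : Fin (n + 2)).succAbove t' ∧
                b 1 < b ((1 : Fin (n + 2)).succAbove t') then (1 : ℤ) else 0) +
              (if 1 < (1 : Fin (n + 2)).succAbove t' ∧
                b 1 < a ((1 : Fin (n + 2)).succAbove t') then (1 : ℤ) else 0))) := by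
        refine Finset.sum_congr rfl fun t' _ => ?_
        rw [hstepb t', hstepa t']
        ring
      rw [hcongr, Finset.sum_add_distrib, Finset.sum_add_distrib, Finset.sum_add_distrib,
        hBcount, hAcount]
      ring
    rw [hsum1, hsum2, ha1]
    have hc : (B.card : ℤ) + (A.card : ℤ) = (N : ℤ) - (b 1 : ℤ) - 1 := by omega
    push_cast
    linarith [hc]
  linarith [key, h1]
end

section
/- Let k be an algebraically closed field. There do not exist a nonincreasing 6-tuple of integers d_1 ≥ … ≥ d_6, a positive integer m, and polynomials p_{ij} ∈ k[x,y] for (i,j) in the set {(1,3),(1,4),(1,5),(1,6),(2,3),(2,4),(2,5),(2,6),(3,5),(3,6),(4,5),(4,6)}, each nonzero one homogeneous of degree m(d_i − d_j + 1), such that the 6×6 strictly upper triangular matrix M whose entries are p_{ij} at these positions and 0 elsewhere satisfies M² = 0 and has rank exactly 3 after evaluation at every nonzero point γ ∈ k². -/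
set_option maxHeartbeats 1000000

open MvPolynomial Matrix


@[simp] private lemma cv2_1 {α : Type*} (x : α) (u : Fin 1 → α) : vecCons x u (1 : Fin 2) = u 0 := rfl
@[simp] private lemma cv3_1 {α : Type*} (x : α) (u : Fin 2 → α) : vecCons x u (1 : Fin 3) = u 0 := rfl
@[simp] private lemma cv3_2 {α : Type*} (x : α) (u : Fin 2 → α) : vecCons x u (2 : Fin 3) = u 1 := rfl
@[simp] private lemma cv4_1 {α : Type*} (x : α) (u : Fin 3 → α) : vecCons x u (1 : Fin 4) = u 0 := rfl
@[simp] private lemma cv4_2 {α : Type*} (x : α) (u : Fin 3 → α) : vecCons x u (2 : Fin 4) = u 1 := rfl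
@[simp] private lemma cv4_3 {α : Type*} (x : α) (u : Fin 3 → α) : vecCons x u (3 : Fin 4) = u 2 := rfl
@[simp] private lemma cv5_1 {α : Type*} (x : α) (u : Fin 4 → α) : vecCons x u (1 : Fin 5) = u 0 := rfl
@[simp] private lemma cv5_2 {α : Type*} (x : α) (u : Fin 4 → α) : vecCons x u (2 : Fin 5) = u 1 := rfl
@[simp] private lemma cv5_3 {α : Type*} (x : α) (u : Fin 4 → α) : vecCons x u (3 : Fin 5) = u 2 := rfl
@[simp] private lemma cv5_4 {α : Type*} (x : α) (u : Fin 4 → α) : vecCons x u (4 : Fin 5) = u 3 := rfl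
@[simp] private lemma cv6_1 {α : Type*} (x : α) (u : Fin 5 → α) : vecCons x u (1 : Fin 6) = u 0 := rfl
@[simp] private lemma cv6_2 {α : Type*} (x : α) (u : Fin 5 → α) : vecCons x u (2 : Fin 6) = u 1 := rfl
@[simp] private lemma cv6_3 {α : Type*} (x : α) (u : Fin 5 → α) : vecCons x u (3 : Fin 6) = u 2 := rfl
@[simp] private lemma cv6_4 {α : Type*} (x : α) (u : Fin 5 → α) : vecCons x u (4 : Fin 6) = u 3 := rfl
@[simp] private lemma cv6_5 {α : Type*} (x : α) (u : Fin 5 → α) : vecCons x u (5 : Fin 6) = u 4 := rfl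

@[simp] private lemma vecHead_constf {α : Type*} {n : ℕ} (c : α) :
    vecHead (fun _ : Fin (n+1) => c) = c := rfl

@[simp] private lemma vecTail_constf {α : Type*} {n : ℕ} (c : α) :
    vecTail (fun _ : Fin (n+1) => c) = (fun _ : Fin n => c) := rfl

private lemma rank_le_two_of_factor {k : Type*} [Field k]
    (N : Matrix (Fin 6) (Fin 6) k) (v w x y : Fin 6 → k)
    (h : ∀ i j, N i j = v i * x j + w i * y j) : N.rank ≤ 2 := by
  have hN : N = (Matrix.of fun i (t : Fin 2) => ![v i, w i] t) *
      (Matrix.of fun (t : Fin 2) j => ![x j, y j] t) := by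
    ext i j
    simp [Matrix.mul_apply, Fin.sum_univ_two, h]
  calc N.rank = _ := congrArg Matrix.rank hN
    _ ≤ (Matrix.of fun i (t : Fin 2) => ![v i, w i] t).rank := Matrix.rank_mul_le_left _ _
    _ ≤ Fintype.card (Fin 2) := Matrix.rank_le_card_width _
    _ = 2 := by simp

private lemma rank1_factor {R : Type*} [CommRing R] [IsDomain R] [UniqueFactorizationMonoid R]
    (a b c e : R) (h : a * e = b * c) :
    ∃ G c₁ a' b', a = G * a' ∧ b = G * b' ∧ c = c₁ * a' ∧ e = c₁ * b' := by
  by_cases ha : a = 0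
  · by_cases hb : b = 0
    · exact ⟨0, 1, c, e, by simp [ha], by simp [hb], by ring, by ring⟩
    · have hc : c = 0 := by
        have h0 : b * c = 0 := by rw [← h, ha, zero_mul]
        rcases mul_eq_zero.1 h0 with h' | h'
        · exact absurd h' hb
        · exact h'
      exact ⟨b, e, 0, 1, by simp [ha], by ring, by simp [hc], by ring⟩
  · obtain ⟨a', b', G, hrel, hGa, hGb⟩ :=
      UniqueFactorizationMonoid.exists_reduced_factors a ha b
    have hG : G ≠ 0 := fun h0 => ha (by rw [← hGa, h0, zero_mul])
    have ha' : a' ≠ 0 := fun h0 => ha (by rw [← hGa, h0, mul_zero])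
    have key : a' * e = b' * c := by
      have h1 : G * (a' * e) = G * (b' * c) := by
        rw [← mul_assoc, ← mul_assoc, hGa, hGb, h]
      exact mul_left_cancel₀ hG h1
    obtain ⟨c₁, hc₁⟩ := hrel.dvd_of_dvd_mul_left ⟨e, key.symm⟩
    have he : e = c₁ * b' := by
      have h2 : a' * e = a' * (c₁ * b') := by rw [key, hc₁]; ring
      exact mul_left_cancel₀ ha' h2
    exact ⟨G, c₁, a', b', hGa.symm, hGb.symm, by rw [hc₁]; ring, he⟩

private lemma exists_nontrivial_zero {k : Type*} [Field k] [IsAlgClosed k]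
    (D : MvPolynomial (Fin 2) k) (hD : MvPolynomial.eval (0 : Fin 2 → k) D = 0) :
    ∃ γ : Fin 2 → k, γ ≠ 0 ∧ MvPolynomial.eval γ D = 0 := by
  set q := MvPolynomial.finSuccEquiv k 1 D with hq
  by_cases hdeg : q.natDegree = 0
  · refine ⟨Fin.cons 1 0, ?_, ?_⟩
    · intro h0
      have h1 := congrFun h0 0
      simp at h1
    · have h1 : MvPolynomial.eval (Fin.cons (1 : k) (0 : Fin 1 → k)) D
          = Polynomial.eval 1 (Polynomial.map (MvPolynomial.eval (0 : Fin 1 → k)) q) :=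
        MvPolynomial.eval_eq_eval_mv_eval' _ _ _
      have h0' : MvPolynomial.eval (Fin.cons (0 : k) (0 : Fin 1 → k)) D
          = Polynomial.eval 0 (Polynomial.map (MvPolynomial.eval (0 : Fin 1 → k)) q) :=
        MvPolynomial.eval_eq_eval_mv_eval' _ _ _
      have hcons : (Fin.cons (0 : k) (0 : Fin 1 → k)) = (0 : Fin 2 → k) := by
        funext i
        refine Fin.cases ?_ ?_ i <;> simp
      have hqC : q = Polynomial.C (q.coeff 0) := Polynomial.eq_C_of_natDegree_eq_zero hdeg
      rw [hcons] at h0'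
      rw [hD] at h0'
      rw [h1, hqC]
      rw [hqC] at h0'
      simpa using h0'.symm
  · have hqne : q ≠ 0 := fun h0 => hdeg (by rw [h0]; simp)
    have hlead : q.leadingCoeff ≠ 0 := Polynomial.leadingCoeff_ne_zero.mpr hqne
    have hX : (MvPolynomial.X 0 * q.leadingCoeff : MvPolynomial (Fin 1) k) ≠ 0 :=
      mul_ne_zero (MvPolynomial.X_ne_zero 0) hlead
    have hex : ¬ ∀ s : Fin 1 → k,
        MvPolynomial.eval s (MvPolynomial.X 0 * q.leadingCoeff)
          = MvPolynomial.eval s (0 : MvPolynomial (Fin 1) k) := by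
      intro hall
      exact hX (MvPolynomial.funext hall)
    push_neg at hex
    obtain ⟨s, hs⟩ := hex
    have hs0 : s 0 ≠ 0 ∧ MvPolynomial.eval s q.leadingCoeff ≠ 0 := by
      simp only [_root_.map_mul, MvPolynomial.eval_X, map_zero] at hs
      exact ⟨fun h0 => hs (by rw [h0, zero_mul]), fun h0 => hs (by rw [h0, mul_zero])⟩
    set q' := Polynomial.map (MvPolynomial.eval s) q with hq'
    have hcoeff : q'.coeff q.natDegree ≠ 0 := by
      rw [hq', Polynomial.coeff_map]
      exact hs0.2
    have hdeg' : q'.degree ≠ 0 := by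
      intro h0
      have hnd : q'.natDegree = 0 := Polynomial.natDegree_eq_zero_iff_degree_le_zero.mpr h0.le
      have := Polynomial.coeff_eq_zero_of_natDegree_lt (p := q') (n := q.natDegree) (by omega)
      exact hcoeff this
    obtain ⟨y, hy⟩ := IsAlgClosed.exists_root q' hdeg'
    refine ⟨Fin.cons y s, ?_, ?_⟩
    · intro h0
      have h1 := congrFun h0 1
      have h2 : (1 : Fin 2) = Fin.succ 0 := rfl
      rw [h2, Fin.cons_succ] at h1
      exact hs0.1 h1
    · rw [MvPolynomial.eval_eq_eval_mv_eval']
      exact hy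

private lemma scenA {k : Type*} [Field k]
    (a3 a4 a5 a6 b3 b4 b5 b6 f g h l : k)
    (h3 : a3 = 0) (h4 : a4 = 0) (h3' : b3 = 0) (h4' : b4 = 0) :
    (!![0, 0, a3, a4, a5, a6;
        0, 0, b3, b4, b5, b6;
        0, 0, 0,  0,  f,  g;
        0, 0, 0,  0,  h,  l;
        0, 0, 0,  0,  0,  0;
        0, 0, 0,  0,  0,  0] : Matrix (Fin 6) (Fin 6) k).rank ≤ 2 := by
  apply rank_le_two_of_factor _ ![a5, b5, f, h, 0, 0] ![a6, b6, g, l, 0, 0]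
    ![0, 0, 0, 0, 1, 0] ![0, 0, 0, 0, 0, 1]
  intro i j
  fin_cases i <;> fin_cases j <;> simp [h3, h4, h3', h4']

private lemma scenB {k : Type*} [Field k]
    (a3 a4 a5 a6 b3 b4 b5 b6 f g h l : k)
    (hf : f = 0) (hg : g = 0) (hh : h = 0) (hl : l = 0) :
    (!![0, 0, a3, a4, a5, a6;
        0, 0, b3, b4, b5, b6;
        0, 0, 0,  0,  f,  g;
        0, 0, 0,  0,  h,  l;
        0, 0, 0,  0,  0,  0;
        0, 0, 0,  0,  0,  0] : Matrix (Fin 6) (Fin 6) k).rank ≤ 2 := by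
  apply rank_le_two_of_factor _ ![1, 0, 0, 0, 0, 0] ![0, 1, 0, 0, 0, 0]
    ![0, 0, a3, a4, a5, a6] ![0, 0, b3, b4, b5, b6]
  intro i j
  fin_cases i <;> fin_cases j <;> simp [hf, hg, hh, hl]

private lemma scenC {k : Type*} [Field k]
    (a3 a4 a5 a6 b3 b4 b5 b6 f g h l G C1 A' B' U V S T : k)
    (ha3 : a3 = G * A') (ha4 : a4 = G * B') (hb3 : b3 = C1 * A') (hb4 : b4 = C1 * B')
    (hf : f = U * S) (hg : g = U * T) (hh : h = V * S) (hl : l = V * T)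
    (hD : (a5 * T - a6 * S) * C1 = (b5 * T - b6 * S) * G)
    (hGC : ¬ (G = 0 ∧ C1 = 0)) (hST : ¬ (S = 0 ∧ T = 0)) :
    (!![0, 0, a3, a4, a5, a6;
        0, 0, b3, b4, b5, b6;
        0, 0, 0,  0,  f,  g;
        0, 0, 0,  0,  h,  l;
        0, 0, 0,  0,  0,  0;
        0, 0, 0,  0,  0,  0] : Matrix (Fin 6) (Fin 6) k).rank ≤ 2 := by
  by_cases hT : T = 0
  · -- then S ≠ 0
    have hS : S ≠ 0 := fun h0 => hST ⟨h0, hT⟩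
    by_cases hG : G = 0
    · have hC1 : C1 ≠ 0 := fun h0 => hGC ⟨hG, h0⟩
      have key : a6 = 0 := by
        have h1 : a6 * (S * C1) = 0 := by linear_combination (-1)*hD + (a5*C1 - b5*G)*hT + (b6*S)*hG
        rcases mul_eq_zero.1 h1 with h' | h'
        · exact h'
        · exact absurd h' (mul_ne_zero hS hC1)
      apply rank_le_two_of_factor _ ![G, C1, 0, 0, 0, 0] ![a5, b5, f, h, 0, 0]
        ![0, 0, A', B', 0, b6/C1] ![0, 0, 0, 0, 1, 0]
      intro i j
      fin_cases i <;> fin_cases j <;>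
        first
          | (simp [ha3, ha4, hb3, hb4, hf, hg, hh, hl, hT, hG, key]; done)
          | (simp [ha3, ha4, hb3, hb4, hf, hg, hh, hl, hT, hG, key]; field_simp; done)
          | (simp [ha3, ha4, hb3, hb4, hf, hg, hh, hl, hT, hG, key]; field_simp; ring1)
    · -- G ≠ 0
      have key : b6 * G = a6 * C1 := by
        have h1 : S * (b6 * G) = S * (a6 * C1) := by
          linear_combination hD - (a5*C1 - b5*G)*hT
        exact mul_left_cancel₀ hS h1
      apply rank_le_two_of_factor _ ![G, C1, 0, 0, 0, 0] ![a5, b5, f, h, 0, 0]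
        ![0, 0, A', B', 0, a6/G] ![0, 0, 0, 0, 1, 0]
      intro i j
      fin_cases i <;> fin_cases j <;>
        first
          | (simp [ha3, ha4, hb3, hb4, hf, hg, hh, hl, hT]; done)
          | (simp [ha3, ha4, hb3, hb4, hf, hg, hh, hl, hT]; field_simp; done)
          | (simp [ha3, ha4, hb3, hb4, hf, hg, hh, hl, hT]; field_simp; ring1)
          | (simp [ha3, ha4, hb3, hb4, hf, hg, hh, hl, hT]; field_simp; linear_combination key)
  · by_cases hG : G = 0
    · have hC1 : C1 ≠ 0 := fun h0 => hGC ⟨hG, h0⟩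
      have key : a5 * T = a6 * S := by
        have h1 : (a5 * T - a6 * S) * C1 = 0 := by rw [hD, hG, mul_zero]
        rcases mul_eq_zero.1 h1 with h' | h'
        · linear_combination h'
        · exact absurd h' hC1
      apply rank_le_two_of_factor _ ![G, C1, 0, 0, 0, 0] ![a6, b6, g, l, 0, 0]
        ![0, 0, A', B', (b5*T - b6*S)/(T*C1), 0] ![0, 0, 0, 0, S/T, 1]
      intro i j
      fin_cases i <;> fin_cases j <;>
        first
          | (simp [ha3, ha4, hb3, hb4, hf, hg, hh, hl, hG]; done)
          | (simp [ha3, ha4, hb3, hb4, hf, hg, hh, hl, hG]; field_simp; done)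
          | (simp [ha3, ha4, hb3, hb4, hf, hg, hh, hl, hG]; field_simp; ring1)
          | (simp [ha3, ha4, hb3, hb4, hf, hg, hh, hl, hG]; field_simp; linear_combination key)
          | (simp [ha3, ha4, hb3, hb4, hf, hg, hh, hl, hG]; field_simp; linear_combination T*key)
    · -- main case T ≠ 0, G ≠ 0
      have key : b5 * (T * G) = (a5 * T - a6 * S) * C1 + S * b6 * G := by
        linear_combination (-1)*hD
      apply rank_le_two_of_factor _ ![G, C1, 0, 0, 0, 0] ![a6, b6, g, l, 0, 0]
        ![0, 0, A', B', (a5*T - a6*S)/(T*G), 0] ![0, 0, 0, 0, S/T, 1]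
      intro i j
      fin_cases i <;> fin_cases j <;>
        first
          | (simp [ha3, ha4, hb3, hb4, hf, hg, hh, hl]; done)
          | (simp [ha3, ha4, hb3, hb4, hf, hg, hh, hl]; field_simp; done)
          | (simp [ha3, ha4, hb3, hb4, hf, hg, hh, hl]; field_simp; ring1)
          | (simp [ha3, ha4, hb3, hb4, hf, hg, hh, hl]; field_simp; linear_combination key)
          | (simp [ha3, ha4, hb3, hb4, hf, hg, hh, hl]; field_simp; linear_combination T*key)

private lemma mapM {k : Type*} [CommSemiring k] (φ : MvPolynomial (Fin 2) k →+* k)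
    (p13 p14 p15 p16 p23 p24 p25 p26 p35 p36 p45 p46 : MvPolynomial (Fin 2) k) :
    (!![0, 0, p13, p14, p15, p16;
        0, 0, p23, p24, p25, p26;
        0, 0, 0,   0,   p35, p36;
        0, 0, 0,   0,   p45, p46;
        0, 0, 0,   0,   0,   0;
        0, 0, 0,   0,   0,   0] : Matrix (Fin 6) (Fin 6) (MvPolynomial (Fin 2) k)).map φ =
    !![0, 0, φ p13, φ p14, φ p15, φ p16;
       0, 0, φ p23, φ p24, φ p25, φ p26;
       0, 0, 0,     0,     φ p35, φ p36;
       0, 0, 0,     0,     φ p45, φ p46;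
       0, 0, 0,     0,     0,     0;
       0, 0, 0,     0,     0,     0] := by
  ext i j
  fin_cases i <;> fin_cases j <;> simp [Matrix.map_apply]


/-- case (vii) of Theorem `mainthm1`: if `σ_ψ ≤ (1,6)(2,3)(4,5)`
then `r < 2`: over an algebraically closed field `k` there is no `6 × 6`
matrix `M` of polynomials in two variables, supported on the positions
`(1,3), (1,4), (1,5), (1,6), (2,3), (2,4), (2,5), (2,6), (3,5), (3,6), (4,5),
(4,6)`, whose nonzero entries are homogeneous of the prescribed degrees
`m (d_i - d_j + 1)`, with `M² = 0` and `M(γ)` of rank exactly `3` for every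
nonzero `γ ∈ k²`. -/
theorem no_morphism_case_vii
    (k : Type*) [Field k] [IsAlgClosed k]
    (d : Fin 6 → ℤ) (hd : Antitone d)
    (m : ℕ) (hm : 0 < m)
    (p13 p14 p15 p16 p23 p24 p25 p26 p35 p36 p45 p46 : MvPolynomial (Fin 2) k)
    (h13 : p13 ≠ 0 → p13.IsHomogeneous ((m : ℤ) * (d 0 - d 2 + 1)).toNat)
    (h14 : p14 ≠ 0 → p14.IsHomogeneous ((m : ℤ) * (d 0 - d 3 + 1)).toNat)
    (h15 : p15 ≠ 0 → p15.IsHomogeneous ((m : ℤ) * (d 0 - d 4 + 1)).toNat)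
    (h16 : p16 ≠ 0 → p16.IsHomogeneous ((m : ℤ) * (d 0 - d 5 + 1)).toNat)
    (h23 : p23 ≠ 0 → p23.IsHomogeneous ((m : ℤ) * (d 1 - d 2 + 1)).toNat)
    (h24 : p24 ≠ 0 → p24.IsHomogeneous ((m : ℤ) * (d 1 - d 3 + 1)).toNat)
    (h25 : p25 ≠ 0 → p25.IsHomogeneous ((m : ℤ) * (d 1 - d 4 + 1)).toNat)
    (h26 : p26 ≠ 0 → p26.IsHomogeneous ((m : ℤ) * (d 1 - d 5 + 1)).toNat)
    (h35 : p35 ≠ 0 → p35.IsHomogeneous ((m : ℤ) * (d 2 - d 4 + 1)).toNat)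
    (h36 : p36 ≠ 0 → p36.IsHomogeneous ((m : ℤ) * (d 2 - d 5 + 1)).toNat)
    (h45 : p45 ≠ 0 → p45.IsHomogeneous ((m : ℤ) * (d 3 - d 4 + 1)).toNat)
    (h46 : p46 ≠ 0 → p46.IsHomogeneous ((m : ℤ) * (d 3 - d 5 + 1)).toNat)
    (M : Matrix (Fin 6) (Fin 6) (MvPolynomial (Fin 2) k))
    (hM : M = !![0, 0, p13, p14, p15, p16;
                 0, 0, p23, p24, p25, p26;
                 0, 0, 0,   0,   p35, p36;
                 0, 0, 0,   0,   p45, p46;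
                 0, 0, 0,   0,   0,   0;
                 0, 0, 0,   0,   0,   0])
    (hsq : M * M = 0)
    (hrank : ∀ γ : Fin 2 → k, γ ≠ 0 → (M.map (MvPolynomial.eval γ)).rank = 3) :
    False := by
  -- the polynomial identities coming from `M * M = 0`
  have E1 : p13 * p35 + p14 * p45 = 0 := by
    have h := congrFun (congrFun hsq 0) 4
    simp [hM, Matrix.mul_apply, Fin.sum_univ_six] at h
    linear_combination h
  have E2 : p13 * p36 + p14 * p46 = 0 := by
    have h := congrFun (congrFun hsq 0) 5
    simp [hM, Matrix.mul_apply, Fin.sum_univ_six] at h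
    linear_combination h
  have E3 : p23 * p35 + p24 * p45 = 0 := by
    have h := congrFun (congrFun hsq 1) 4
    simp [hM, Matrix.mul_apply, Fin.sum_univ_six] at h
    linear_combination h
  have E4 : p23 * p36 + p24 * p46 = 0 := by
    have h := congrFun (congrFun hsq 1) 5
    simp [hM, Matrix.mul_apply, Fin.sum_univ_six] at h
    linear_combination h
  -- the rank hypothesis, rewritten for the evaluated matrix
  have hrank' : ∀ γ : Fin 2 → k, γ ≠ 0 →
      (!![0, 0, eval γ p13, eval γ p14, eval γ p15, eval γ p16;
          0, 0, eval γ p23, eval γ p24, eval γ p25, eval γ p26;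
          0, 0, 0,          0,          eval γ p35, eval γ p36;
          0, 0, 0,          0,          eval γ p45, eval γ p46;
          0, 0, 0,          0,          0,          0;
          0, 0, 0,          0,          0,          0] : Matrix (Fin 6) (Fin 6) k).rank = 3 := by
    intro γ hγ
    have h := hrank γ hγ
    rw [hM] at h
    rw [mapM (MvPolynomial.eval γ)] at h
    exact h
  -- scenario 1 : first block vanishes at γ
  have S1 : ∀ γ : Fin 2 → k, γ ≠ 0 → eval γ p13 = 0 → eval γ p14 = 0 →
      eval γ p23 = 0 → eval γ p24 = 0 → False := by
    intro γ hγ h1 h2 h3 h4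
    have hle := scenA (eval γ p13) (eval γ p14) (eval γ p15) (eval γ p16)
      (eval γ p23) (eval γ p24) (eval γ p25) (eval γ p26)
      (eval γ p35) (eval γ p36) (eval γ p45) (eval γ p46) h1 h2 h3 h4
    have h3' := hrank' γ hγ
    omega
  -- scenario 2 : second block vanishes at γ
  have S2 : ∀ γ : Fin 2 → k, γ ≠ 0 → eval γ p35 = 0 → eval γ p36 = 0 →
      eval γ p45 = 0 → eval γ p46 = 0 → False := by
    intro γ hγ h1 h2 h3 h4
    have hle := scenB (eval γ p13) (eval γ p14) (eval γ p15) (eval γ p16)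
      (eval γ p23) (eval γ p24) (eval γ p25) (eval γ p26)
      (eval γ p35) (eval γ p36) (eval γ p45) (eval γ p46) h1 h2 h3 h4
    have h3' := hrank' γ hγ
    omega
  -- the two determinants vanish identically
  have detA : p13 * p24 - p14 * p23 = 0 := by
    have hz : ∀ γ : Fin 2 → k, eval γ (X 0 * (p13 * p24 - p14 * p23)) =
        eval γ (0 : MvPolynomial (Fin 2) k) := by
      intro γ
      by_cases hγ : γ = 0
      · subst hγ; simp
      · simp only [_root_.map_mul, map_sub, map_zero, eval_X]
        rcases eq_or_ne (eval γ p13 * eval γ p24 - eval γ p14 * eval γ p23) 0 with hdet | hdet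
        · rw [hdet]; ring
        · exfalso
          have e1 := congrArg (eval γ) E1
          have e2 := congrArg (eval γ) E2
          have e3 := congrArg (eval γ) E3
          have e4 := congrArg (eval γ) E4
          simp only [map_add, _root_.map_mul, map_zero] at e1 e2 e3 e4
          apply S2 γ hγ
          · apply mul_left_cancel₀ hdet
            linear_combination eval γ p24 * e1 - eval γ p14 * e3
          · apply mul_left_cancel₀ hdet
            linear_combination eval γ p24 * e2 - eval γ p14 * e4
          · apply mul_left_cancel₀ hdet
            linear_combination eval γ p13 * e3 - eval γ p23 * e1
          · apply mul_left_cancel₀ hdet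
            linear_combination eval γ p13 * e4 - eval γ p23 * e2
    have h0 := MvPolynomial.funext hz
    rcases mul_eq_zero.1 h0 with h | h
    · exact absurd h (MvPolynomial.X_ne_zero 0)
    · exact h
  have detB : p35 * p46 - p36 * p45 = 0 := by
    have hz : ∀ γ : Fin 2 → k, eval γ (X 0 * (p35 * p46 - p36 * p45)) =
        eval γ (0 : MvPolynomial (Fin 2) k) := by
      intro γ
      by_cases hγ : γ = 0
      · subst hγ; simp
      · simp only [_root_.map_mul, map_sub, map_zero, eval_X]
        rcases eq_or_ne (eval γ p35 * eval γ p46 - eval γ p36 * eval γ p45) 0 with hdet | hdet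
        · rw [hdet]; ring
        · exfalso
          have e1 := congrArg (eval γ) E1
          have e2 := congrArg (eval γ) E2
          have e3 := congrArg (eval γ) E3
          have e4 := congrArg (eval γ) E4
          simp only [map_add, _root_.map_mul, map_zero] at e1 e2 e3 e4
          apply S1 γ hγ
          · apply mul_left_cancel₀ hdet
            linear_combination eval γ p46 * e1 - eval γ p45 * e2
          · apply mul_left_cancel₀ hdet
            linear_combination eval γ p35 * e2 - eval γ p36 * e1
          · apply mul_left_cancel₀ hdet
            linear_combination eval γ p46 * e3 - eval γ p45 * e4
          · apply mul_left_cancel₀ hdet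
            linear_combination eval γ p35 * e4 - eval γ p36 * e3
    have h0 := MvPolynomial.funext hz
    rcases mul_eq_zero.1 h0 with h | h
    · exact absurd h (MvPolynomial.X_ne_zero 0)
    · exact h
  -- rank-one factorizations of the two blocks
  obtain ⟨G, c1, A', B', hGa, hGb, hca, hcb⟩ :=
    rank1_factor p13 p14 p23 p24 (by linear_combination detA)
  obtain ⟨U, V, Sp, Tp, hUS, hUT, hVS, hVT⟩ :=
    rank1_factor p35 p36 p45 p46 (by linear_combination detB)
  -- the key polynomial D and a nontrivial zero of it
  have ev0 : ∀ (p : MvPolynomial (Fin 2) k) (n : ℕ), 0 < n → (p ≠ 0 → p.IsHomogeneous n) →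
      eval (0 : Fin 2 → k) p = 0 := by
    intro p n hn hp
    by_cases h : p = 0
    · simp [h]
    · rw [eval_zero]
      rw [MvPolynomial.constantCoeff_eq]
      exact (hp h).coeff_eq_zero (d := 0) (by simp [map_zero]; omega)
  have hd04 : d 4 ≤ d 0 := hd (by decide)
  have hd05 : d 5 ≤ d 0 := hd (by decide)
  have hd14 : d 4 ≤ d 1 := hd (by decide)
  have hd15 : d 5 ≤ d 1 := hd (by decide)
  have hmz : (1 : ℤ) ≤ (m : ℤ) := by exact_mod_cast hm
  have pos : ∀ a b : ℤ, b ≤ a → 0 < ((m : ℤ) * (a - b + 1)).toNat := by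
    intro a b hab
    have h1 : (1 : ℤ) ≤ a - b + 1 := by omega
    have : (1 : ℤ) ≤ (m : ℤ) * (a - b + 1) := by nlinarith
    omega
  have z15 : eval (0 : Fin 2 → k) p15 = 0 := ev0 p15 _ (pos _ _ hd04) h15
  have z16 : eval (0 : Fin 2 → k) p16 = 0 := ev0 p16 _ (pos _ _ hd05) h16
  have z25 : eval (0 : Fin 2 → k) p25 = 0 := ev0 p25 _ (pos _ _ hd14) h25
  have z26 : eval (0 : Fin 2 → k) p26 = 0 := ev0 p26 _ (pos _ _ hd15) h26
  have hD0 : eval (0 : Fin 2 → k)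
      ((p15 * Tp - p16 * Sp) * c1 - (p25 * Tp - p26 * Sp) * G) = 0 := by
    simp only [map_sub, _root_.map_mul, z15, z16, z25, z26]
    ring
  obtain ⟨γ0, hγ0, hDγ⟩ := exists_nontrivial_zero _ hD0
  -- final case analysis at γ0
  by_cases hA : eval γ0 p13 = 0 ∧ eval γ0 p14 = 0 ∧ eval γ0 p23 = 0 ∧ eval γ0 p24 = 0
  · exact S1 γ0 hγ0 hA.1 hA.2.1 hA.2.2.1 hA.2.2.2
  by_cases hB : eval γ0 p35 = 0 ∧ eval γ0 p36 = 0 ∧ eval γ0 p45 = 0 ∧ eval γ0 p46 = 0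
  · exact S2 γ0 hγ0 hB.1 hB.2.1 hB.2.2.1 hB.2.2.2
  -- evaluated factorization identities
  have f13 : eval γ0 p13 = eval γ0 G * eval γ0 A' := by rw [hGa, _root_.map_mul]
  have f14 : eval γ0 p14 = eval γ0 G * eval γ0 B' := by rw [hGb, _root_.map_mul]
  have f23 : eval γ0 p23 = eval γ0 c1 * eval γ0 A' := by rw [hca, _root_.map_mul]
  have f24 : eval γ0 p24 = eval γ0 c1 * eval γ0 B' := by rw [hcb, _root_.map_mul]
  have f35 : eval γ0 p35 = eval γ0 U * eval γ0 Sp := by rw [hUS, _root_.map_mul]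
  have f36 : eval γ0 p36 = eval γ0 U * eval γ0 Tp := by rw [hUT, _root_.map_mul]
  have f45 : eval γ0 p45 = eval γ0 V * eval γ0 Sp := by rw [hVS, _root_.map_mul]
  have f46 : eval γ0 p46 = eval γ0 V * eval γ0 Tp := by rw [hVT, _root_.map_mul]
  have hGC : ¬ (eval γ0 G = 0 ∧ eval γ0 c1 = 0) := by
    rintro ⟨hG0, hC0⟩
    exact hA ⟨by rw [f13, hG0, zero_mul], by rw [f14, hG0, zero_mul],
      by rw [f23, hC0, zero_mul], by rw [f24, hC0, zero_mul]⟩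
  have hST : ¬ (eval γ0 Sp = 0 ∧ eval γ0 Tp = 0) := by
    rintro ⟨hS0, hT0⟩
    exact hB ⟨by rw [f35, hS0, mul_zero], by rw [f36, hT0, mul_zero],
      by rw [f45, hS0, mul_zero], by rw [f46, hT0, mul_zero]⟩
  have hDkey : (eval γ0 p15 * eval γ0 Tp - eval γ0 p16 * eval γ0 Sp) * eval γ0 c1 =
      (eval γ0 p25 * eval γ0 Tp - eval γ0 p26 * eval γ0 Sp) * eval γ0 G := by
    simp only [map_sub, _root_.map_mul] at hDγ
    linear_combination hDγ
  have hle := scenC (eval γ0 p13) (eval γ0 p14) (eval γ0 p15) (eval γ0 p16)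
    (eval γ0 p23) (eval γ0 p24) (eval γ0 p25) (eval γ0 p26)
    (eval γ0 p35) (eval γ0 p36) (eval γ0 p45) (eval γ0 p46)
    (eval γ0 G) (eval γ0 c1) (eval γ0 A') (eval γ0 B')
    (eval γ0 U) (eval γ0 V) (eval γ0 Sp) (eval γ0 Tp)
    f13 f14 f23 f24 f35 f36 f45 f46 hDkey hGC hST
  have h3' := hrank' γ0 hγ0
  omega
end
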